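/- For every g ≥ 1 and every 0 ≤ f ≤ g, the Newton polygon ν_g^f (with f slopes of 0, f slopes of 1, and, if g-f ≥ 3, the slopes 1/(g-f) and (g-f-1)/(g-f) each with multiplicity g-f; if g-f ∈ {1,2}, slope 1/2 with multiplicity 2(g-f)) is a symmetric admissible Newton polygon of height 2g, and it is the unique maximal element among symmetric admissible Newton polygons of height 2g with slope-0 multiplicity f, with respect to the partial order ⪯. -/

import Mathlib

/-- A symmetric admissible Newton polygon of height `2g`, recorded by its
multiplicity function `e : ℚ → ℤ≥0`: finitely supported in `ℚ ∩ [0,1]`,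
with `e(λ)·λ ∈ ℤ`, `e(λ) = e(1-λ)`, and total multiplicity `2g`. -/
def IsSymAdmissibleNP (g : ℕ) (e : ℚ → ℕ) : Prop :=
  (Function.support e).Finite ∧
  (∀ l : ℚ, e l ≠ 0 → 0 ≤ l ∧ l ≤ 1) ∧
  (∀ l : ℚ, ∃ z : ℤ, (e l : ℚ) * l = (z : ℚ)) ∧
  (∀ l : ℚ, e l = e (1 - l)) ∧
  ∑ᶠ l : ℚ, e l = 2 * g

/-- The convex conjugate (support function) of the Newton polygon with
multiplicity function `e`: `t ↦ ∑_λ e(λ)·max(t-λ, 0)`.  The polygon `Γ(e₁)`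
lies on or above `Γ(e₂)` (with the same endpoints) iff the conjugate of `e₁` is
pointwise at most that of `e₂`. -/
noncomputable def npConj (e : ℚ → ℕ) (t : ℚ) : ℚ := ∑ᶠ l : ℚ, (e l : ℚ) * max (t - l) 0

/-- `e₁ ⪯ e₂`: the Newton polygon of `e₁` lies on or above that of `e₂`. -/
def NPOnOrAbove (e₁ e₂ : ℚ → ℕ) : Prop := ∀ t : ℚ, npConj e₁ t ≤ npConj e₂ t

/-- `ν_g^0`: slope `1/2` with multiplicity `2g` if `g ≤ 2`; slopes `1/g` and
`(g-1)/g` each with multiplicity `g` if `g ≥ 3`. -/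
noncomputable def nuZero (g : ℕ) : ℚ → ℕ :=
  if g ≤ 2 then fun l => if l = 1/2 then 2 * g else 0
  else fun l => if l = 1 / (g : ℚ) ∨ l = ((g : ℚ) - 1) / (g : ℚ) then g else 0

/-- `ν_g^f = ν_f^f ⊕ ν_{g-f}^0`: `f` slopes each of `0` and `1`, together with
`ν_{g-f}^0`. -/
noncomputable def nuGF (g f : ℕ) : ℚ → ℕ := fun l =>
  (if l = 0 ∨ l = 1 then f else 0) + nuZero (g - f) l

/-!
Splitting off the slopes `0` and `1` reduces everything to `p`-rank zero, where `ν_c^0` consists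
of the slopes `s = 1 / max(c, 2)` and `1 - s`, each with multiplicity `c`. A slope `λ ≠ 1/2` of a
symmetric polygon of height `2c` has multiplicity `e(λ) ≤ c`, so integrality `e(λ)·λ ≥ 1` forces
every slope of a `p`-rank-zero polygon into `[s, 1 - s]`. As `λ ↦ max(t - λ, 0)` is convex,
moving all slopes to the endpoints `s`, `1 - s` while keeping total mass `2c` and first moment `c`
can only increase the conjugate: this is `e ⪯ ν`. Uniqueness holds because the conjugate
determines the polygon: its second difference at `x` recovers `e(x)`.
-/

open Function

section Hinge

variable {K : Type*} [Field K] [LinearOrder K] [IsStrictOrderedRing K]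

theorem mul_max_sub_le_of_mem_Icc {a b l : K} (hl : l ∈ Set.Icc a b) (t : K) :
    (b - a) * max (t - l) 0 ≤ (b - l) * max (t - a) 0 + (l - a) * max (t - b) 0 := by
  have hbl : 0 ≤ b - l := sub_nonneg.2 hl.2
  have hla : 0 ≤ l - a := sub_nonneg.2 hl.1
  rw [mul_max_of_nonneg _ _ (by linarith), mul_zero]
  refine max_le ?_ (by positivity)
  calc (b - a) * (t - l) = (b - l) * (t - a) + (l - a) * (t - b) := by ring
    _ ≤ _ := by gcongr <;> exact le_max_left _ _

theorem sum_mul_max_sub_le_of_mem_Icc {ι : Type*} {M : Finset ι} {w x : ι → K} {a b p q : K}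
    (hab : a ≤ b) (hw : ∀ i ∈ M, 0 ≤ w i) (hM : ∀ i ∈ M, x i ∈ Set.Icc a b)
    (hmass : ∑ i ∈ M, w i = p + q) (hmean : ∑ i ∈ M, w i * x i = p * a + q * b) (t : K) :
    ∑ i ∈ M, w i * max (t - x i) 0 ≤ p * max (t - a) 0 + q * max (t - b) 0 := by
  rcases hab.eq_or_lt with rfl | hab
  · have hx : ∀ i ∈ M, x i = a := fun i hi => le_antisymm (hM i hi).2 (hM i hi).1
    rw [Finset.sum_congr rfl fun i hi => by rw [hx i hi], ← Finset.sum_mul, hmass, add_mul]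
  refine le_of_mul_le_mul_left ?_ (sub_pos.2 hab)
  calc (b - a) * ∑ i ∈ M, w i * max (t - x i) 0
      = ∑ i ∈ M, w i * ((b - a) * max (t - x i) 0) := by
        rw [Finset.mul_sum]; exact Finset.sum_congr rfl fun i _ => by ring
    _ ≤ ∑ i ∈ M, w i * ((b - x i) * max (t - a) 0 + (x i - a) * max (t - b) 0) :=
        Finset.sum_le_sum fun i hi =>
          mul_le_mul_of_nonneg_left (mul_max_sub_le_of_mem_Icc (hM i hi) t) (hw i hi)
    _ = (b * ∑ i ∈ M, w i - ∑ i ∈ M, w i * x i) * max (t - a) 0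
          + (∑ i ∈ M, w i * x i - a * ∑ i ∈ M, w i) * max (t - b) 0 := by
        simp only [Finset.mul_sum, Finset.sum_mul, ← Finset.sum_sub_distrib,
          ← Finset.sum_add_distrib]
        exact Finset.sum_congr rfl fun i _ => by ring
    _ = (b - a) * (p * max (t - a) 0 + q * max (t - b) 0) := by
        rw [hmass, hmean]; ring

theorem hinge_second_diff {x l ε : K} (hε : 0 < ε) (hl : l ≠ x → ε ≤ |l - x|) :
    max (x + ε - l) 0 + max (x - ε - l) 0 - 2 * max (x - l) 0 = if l = x then ε else 0 := by
  split_ifs with hlx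
  · subst hlx
    simp [hε.le]
  rcases le_abs'.1 (hl hlx) with h | h
  · rw [max_eq_left (by linarith), max_eq_left (by linarith), max_eq_left (by linarith)]; ring
  · rw [max_eq_right (by linarith), max_eq_right (by linarith), max_eq_right (by linarith)]; ring

theorem exists_pos_le_abs_sub {S : Set K} (hS : S.Finite) (x : K) :
    ∃ ε > 0, ∀ l ∈ S, l ≠ x → ε ≤ |l - x| := by
  classical
  set D := insert 1 ((hS.toFinset.erase x).image fun l => |l - x|)
  refine ⟨D.min' (Finset.insert_nonempty _ _), ?_, fun l hl hlx => D.min'_le _ ?_⟩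
  · refine (Finset.lt_min'_iff _ _).2 fun d hd => ?_
    simp only [D, Finset.mem_insert, Finset.mem_image, Finset.mem_erase] at hd
    obtain rfl | ⟨l, ⟨hlx, -⟩, rfl⟩ := hd
    exacts [one_pos, abs_pos.2 (sub_ne_zero.2 hlx)]
  · simp only [D, Finset.mem_insert, Finset.mem_image, Finset.mem_erase, Set.Finite.mem_toFinset]
    exact Or.inr ⟨l, ⟨hlx, hl⟩, rfl⟩

end Hinge

theorem finsum_cast_mul_eq_sum {e : ℚ → ℕ} {S : Finset ℚ} (hS : support e ⊆ S) (φ : ℚ → ℚ) :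
    ∑ᶠ l, (e l : ℚ) * φ l = ∑ l ∈ S, (e l : ℚ) * φ l :=
  finsum_eq_sum_of_support_subset _ fun l hl => hS fun h => hl (by simp [h])

theorem finite_support_cast_mul {e : ℚ → ℕ} (he : (support e).Finite) (φ : ℚ → ℚ) :
    (support fun l => (e l : ℚ) * φ l).Finite :=
  he.subset fun l hl h => hl (by simp [h])

theorem npConj_add {e₁ e₂ : ℚ → ℕ} (h₁ : (support e₁).Finite) (h₂ : (support e₂).Finite)
    (t : ℚ) : npConj (e₁ + e₂) t = npConj e₁ t + npConj e₂ t := by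
  simp only [npConj, Pi.add_apply, Nat.cast_add, add_mul]
  exact finsum_add_distrib (finite_support_cast_mul h₁ _) (finite_support_cast_mul h₂ _)

theorem npConj_single (x : ℚ) (n : ℕ) (t : ℚ) :
    npConj (Pi.single x n) t = n * max (t - x) 0 := by
  rw [npConj, finsum_eq_single _ x fun l hl => by simp [hl], Pi.single_eq_same]

theorem npConj_second_diff {e : ℚ → ℕ} (he : (support e).Finite) {x ε : ℚ} (hε : 0 < ε)
    (hsep : ∀ l, e l ≠ 0 → l ≠ x → ε ≤ |l - x|) :
    npConj e (x + ε) + npConj e (x - ε) - 2 * npConj e x = ε * e x := by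
  classical
  have hS : support e ⊆ ↑(insert x he.toFinset) := fun l hl => by simp [hl]
  simp only [npConj, finsum_cast_mul_eq_sum hS, Finset.mul_sum, ← Finset.sum_add_distrib,
    ← Finset.sum_sub_distrib]
  have hterm : ∀ l, (e l : ℚ) * max (x + ε - l) 0 + (e l : ℚ) * max (x - ε - l) 0
      - 2 * ((e l : ℚ) * max (x - l) 0) = if l = x then ε * e x else 0 := by
    intro l
    by_cases hl : e l = 0
    · obtain rfl | hlx := eq_or_ne l x <;> simp [*]
    calc _ = (e l : ℚ) * (max (x + ε - l) 0 + max (x - ε - l) 0 - 2 * max (x - l) 0) := by ring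
      _ = _ := by
        rw [hinge_second_diff hε (hsep l hl)]
        split_ifs with hlx <;> simp [hlx, mul_comm]
  rw [Finset.sum_congr rfl fun l _ => hterm l, Finset.sum_ite_eq']
  simp

theorem npConj_injective {e₁ e₂ : ℚ → ℕ} (h₁ : (support e₁).Finite) (h₂ : (support e₂).Finite)
    (h : ∀ t, npConj e₁ t = npConj e₂ t) : e₁ = e₂ := by
  funext x
  obtain ⟨ε, hε, hsep⟩ := exists_pos_le_abs_sub (h₁.union h₂) x
  have d₁ := npConj_second_diff h₁ hε fun l hl => hsep l (Or.inl hl)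
  have d₂ := npConj_second_diff h₂ hε fun l hl => hsep l (Or.inr hl)
  rw [h, h, h, d₂] at d₁
  exact_mod_cast mul_left_cancel₀ hε.ne' d₁.symm

theorem NPOnOrAbove.antisymm {e₁ e₂ : ℚ → ℕ} (h₁ : (support e₁).Finite)
    (h₂ : (support e₂).Finite) (h₁₂ : NPOnOrAbove e₁ e₂) (h₂₁ : NPOnOrAbove e₂ e₁) : e₁ = e₂ :=
  npConj_injective h₁ h₂ fun t => le_antisymm (h₁₂ t) (h₂₁ t)

theorem finite_support_single (x : ℚ) (n : ℕ) : (support (Pi.single x n : ℚ → ℕ)).Finite :=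
  (Set.finite_singleton x).subset Pi.support_single_subset

/-- The polygon with slopes `x` and `1 - x`, each of multiplicity `n`; for `x = 1/2` the two
summands coincide and give slope `1/2` with multiplicity `2n`. -/
def symPair (n : ℕ) (x : ℚ) : ℚ → ℕ := Pi.single x n + Pi.single (1 - x) n

theorem finite_support_symPair (n : ℕ) (x : ℚ) : (support (symPair n x)).Finite :=
  HasFiniteSupport.add (finite_support_single x n) (finite_support_single (1 - x) n)

theorem symPair_one_sub (n : ℕ) (x l : ℚ) : symPair n x (1 - l) = symPair n x l := by
  have h : 1 - l = x ↔ l = 1 - x := by constructor <;> intro h <;> linarith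
  simp only [symPair, Pi.add_apply, Pi.single_apply, h, sub_right_inj]
  exact add_comm _ _

theorem finsum_symPair (n : ℕ) (x : ℚ) : ∑ᶠ l, symPair n x l = 2 * n := by
  have hsingle : ∀ y : ℚ, ∑ᶠ l, Pi.single y n l = n := fun y => by
    rw [finsum_eq_single _ y fun l hl => by simp [hl], Pi.single_eq_same]
  simp only [symPair, Pi.add_apply]
  rw [finsum_add_distrib (finite_support_single x n) (finite_support_single (1 - x) n),
    hsingle, hsingle, two_mul]

theorem npConj_symPair (n : ℕ) (x t : ℚ) :
    npConj (symPair n x) t = n * max (t - x) 0 + n * max (t - (1 - x)) 0 := by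
  rw [symPair, npConj_add (finite_support_single x n) (finite_support_single (1 - x) n),
    npConj_single, npConj_single]

theorem isSymAdmissibleNP_symPair {n : ℕ} {x : ℚ} (hx₀ : 0 ≤ x) (hx₁ : x ≤ 1)
    (hint : x = 1 / 2 ∨ ∃ z : ℤ, (n : ℚ) * x = z) : IsSymAdmissibleNP n (symPair n x) := by
  refine ⟨finite_support_symPair n x, fun l hl => ?_, fun l => ?_,
    fun l => (symPair_one_sub n x l).symm, finsum_symPair n x⟩
  · have hlx : l = x ∨ l = 1 - x := by
      by_contra! h
      simp [symPair, h.1, h.2] at hl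
    rcases hlx with rfl | rfl <;> constructor <;> linarith
  · simp only [symPair, Pi.add_apply, Pi.single_apply]
    split_ifs with h₁ h₂ h₂
    · exact ⟨n, by push_cast; linear_combination (n : ℚ) * h₁ + (n : ℚ) * h₂⟩
    · obtain ⟨z, hz⟩ := hint.resolve_left fun hx => h₂ (by linarith)
      exact ⟨z, by push_cast; linear_combination (n : ℚ) * h₁ + hz⟩
    · obtain ⟨z, hz⟩ := hint.resolve_left fun hx => h₁ (by linarith)
      exact ⟨n - z, by push_cast; linear_combination (n : ℚ) * h₂ - hz⟩
    · exact ⟨0, by simp⟩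

theorem IsSymAdmissibleNP.add {g₁ g₂ : ℕ} {e₁ e₂ : ℚ → ℕ} (h₁ : IsSymAdmissibleNP g₁ e₁)
    (h₂ : IsSymAdmissibleNP g₂ e₂) : IsSymAdmissibleNP (g₁ + g₂) (e₁ + e₂) := by
  obtain ⟨hfin₁, hbd₁, hint₁, hsym₁, htot₁⟩ := h₁
  obtain ⟨hfin₂, hbd₂, hint₂, hsym₂, htot₂⟩ := h₂
  refine ⟨HasFiniteSupport.add hfin₁ hfin₂, fun l hl => ?_, fun l => ?_,
    fun l => by simp only [Pi.add_apply, hsym₁ l, hsym₂ l], ?_⟩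
  · by_cases h : e₁ l = 0
    · exact hbd₂ l (by simpa [h] using hl)
    · exact hbd₁ l h
  · obtain ⟨z₁, hz₁⟩ := hint₁ l
    obtain ⟨z₂, hz₂⟩ := hint₂ l
    exact ⟨z₁ + z₂, by push_cast [Pi.add_apply]; rw [add_mul, hz₁, hz₂]⟩
  · simp only [Pi.add_apply]
    rw [finsum_add_distrib hfin₁ hfin₂, htot₁, htot₂, mul_add]

def nuZeroSlope (c : ℕ) : ℚ := 1 / max (c : ℚ) 2

theorem nuZeroSlope_pos (c : ℕ) : 0 < nuZeroSlope c := by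
  unfold nuZeroSlope; positivity

theorem nuZeroSlope_le_half (c : ℕ) : nuZeroSlope c ≤ 1 / 2 :=
  one_div_le_one_div_of_le two_pos (le_max_right _ _)

theorem nuZero_eq_symPair (c : ℕ) : nuZero c = symPair c (nuZeroSlope c) := by
  funext l
  unfold nuZero nuZeroSlope
  split_ifs with hc
  · rw [max_eq_right (by exact_mod_cast hc : (c : ℚ) ≤ 2)]
    simp only [symPair, Pi.add_apply, Pi.single_apply, show (1 : ℚ) - 1 / 2 = 1 / 2 by norm_num]
    split_ifs <;> ring
  · have hc3 : (3 : ℚ) ≤ c := by exact_mod_cast (not_le.1 hc)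
    have hne : (1 : ℚ) / c ≠ (c - 1) / c := fun h => by
      rw [div_left_inj' (by positivity)] at h; linarith
    rw [max_eq_left (by linarith)]
    simp only [symPair, Pi.add_apply, Pi.single_apply,
      show 1 - 1 / (c : ℚ) = (c - 1) / c by field_simp]
    split_ifs with h₁ h₂ <;> simp_all

theorem isSymAdmissibleNP_nuZero (c : ℕ) : IsSymAdmissibleNP c (nuZero c) := by
  rw [nuZero_eq_symPair]
  refine isSymAdmissibleNP_symPair (nuZeroSlope_pos c).le
    ((nuZeroSlope_le_half c).trans (by norm_num)) ?_
  unfold nuZeroSlope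
  rcases le_or_gt c 2 with hc | hc
  · left
    rw [max_eq_right (by exact_mod_cast hc)]
  · refine Or.inr ⟨1, ?_⟩
    rw [max_eq_left (by exact_mod_cast hc.le)]
    field_simp
    simp

theorem nuZero_apply_zero (c : ℕ) : nuZero c 0 = 0 := by
  have h₁ := nuZeroSlope_pos c
  have h₂ := nuZeroSlope_le_half c
  rw [nuZero_eq_symPair]
  simp only [symPair, Pi.add_apply, Pi.single_apply, if_neg h₁.ne,
    if_neg (show (0 : ℚ) ≠ 1 - nuZeroSlope c by linarith), add_zero]

theorem nuGF_eq (g f : ℕ) : nuGF g f = symPair f 0 + nuZero (g - f) := by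
  funext l
  simp only [nuGF, Pi.add_apply, symPair, Pi.single_apply, sub_zero]
  congr 1
  split_ifs <;> simp_all

theorem isSymAdmissibleNP_nuGF {g f : ℕ} (hf : f ≤ g) : IsSymAdmissibleNP g (nuGF g f) := by
  have h := (isSymAdmissibleNP_symPair (n := f) le_rfl zero_le_one (Or.inr ⟨0, by simp⟩)).add
    (isSymAdmissibleNP_nuZero (g - f))
  rwa [Nat.add_sub_cancel' hf, ← nuGF_eq] at h

theorem nuGF_apply_zero (g f : ℕ) : nuGF g f 0 = f := by
  simp [nuGF, nuZero_apply_zero]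

def interiorPart (e : ℚ → ℕ) : ℚ → ℕ := fun l => if l = 0 ∨ l = 1 then 0 else e l

theorem interiorPart_apply_zero (e : ℚ → ℕ) : interiorPart e 0 = 0 := by
  simp [interiorPart]

namespace IsSymAdmissibleNP

variable {g : ℕ} {e : ℚ → ℕ}

theorem apply_one (he : IsSymAdmissibleNP g e) : e 1 = e 0 := by
  simpa using (he.2.2.2.1 0).symm

theorem apply_le_of_ne_half (he : IsSymAdmissibleNP g e) {l : ℚ} (hl : l ≠ 1 / 2) :
    e l ≤ g := by
  classical
  obtain ⟨hfin, -, -, hsym, htot⟩ := he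
  have hpair : e l + e (1 - l) ≤ ∑ᶠ l, e l := by
    have hS : support e ⊆ ↑(insert l (insert (1 - l) hfin.toFinset)) := fun l hl => by simp [hl]
    rw [finsum_eq_sum_of_support_subset _ hS, ← Finset.sum_pair fun h => hl (by linarith)]
    exact Finset.sum_le_sum_of_subset fun x hx => by
      simp only [Finset.mem_insert, Finset.mem_singleton] at hx
      rcases hx with rfl | rfl <;> simp
  have := hsym l
  omega

theorem finsum_cast (he : IsSymAdmissibleNP g e) : ∑ᶠ l, (e l : ℚ) = 2 * g := by
  have h := (Nat.castAddMonoidHom ℚ).map_finsum he.1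
  simp only [Nat.coe_castAddMonoidHom, he.2.2.2.2] at h
  exact_mod_cast h.symm

theorem finsum_mul_self (he : IsSymAdmissibleNP g e) : ∑ᶠ l, (e l : ℚ) * l = g := by
  have hrefl : ∑ᶠ l, (e l : ℚ) * (1 - l) = ∑ᶠ l, (e l : ℚ) * l := by
    rw [← finsum_comp_equiv (Equiv.subLeft (1 : ℚ)) (f := fun l => (e l : ℚ) * l)]
    simp only [Equiv.subLeft_apply, ← he.2.2.2.1]
  have hsum : ∑ᶠ l, (e l : ℚ) * l + ∑ᶠ l, (e l : ℚ) * (1 - l) = 2 * g := by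
    rw [← finsum_add_distrib (finite_support_cast_mul he.1 _) (finite_support_cast_mul he.1 _),
      ← he.finsum_cast]
    exact finsum_congr fun l => by ring
  linarith

theorem symPair_add_interiorPart (he : IsSymAdmissibleNP g e) :
    symPair (e 0) 0 + interiorPart e = e := by
  funext l
  simp only [Pi.add_apply, symPair, interiorPart, Pi.single_apply, sub_zero]
  split_ifs <;> simp_all [he.apply_one]

theorem interiorPart (he : IsSymAdmissibleNP g e) :
    IsSymAdmissibleNP (g - e 0) (interiorPart e) := by
  obtain ⟨hfin, hbd, hint, hsym, htot⟩ := id he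
  have hsupp : ∀ l, _root_.interiorPart e l ≠ 0 → e l ≠ 0 := fun l hl h =>
    hl (by simp [_root_.interiorPart, h])
  refine ⟨hfin.subset hsupp, fun l hl => hbd l (hsupp l hl), fun l => ?_, fun l => ?_, ?_⟩
  · unfold _root_.interiorPart
    split_ifs
    exacts [⟨0, by simp⟩, hint l]
  · have h : (1 - l = 0 ∨ 1 - l = 1) ↔ (l = 0 ∨ l = 1) := by
      constructor <;> rintro (h | h) <;> [right; left; right; left] <;> linarith
    simp only [_root_.interiorPart, h, ← hsym l]
  · rw [← he.symPair_add_interiorPart] at htot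
    simp only [Pi.add_apply] at htot
    rw [finsum_add_distrib (finite_support_symPair _ _) (hfin.subset hsupp),
      finsum_symPair] at htot
    omega

theorem nuZeroSlope_le (he : IsSymAdmissibleNP g e) (he₀ : e 0 = 0) {l : ℚ} (hl : e l ≠ 0) :
    nuZeroSlope g ≤ l := by
  have hl₀ : 0 < l := (he.2.1 l hl).1.lt_of_ne (by rintro rfl; exact hl he₀)
  rcases eq_or_ne l (1 / 2) with rfl | hhalf
  · exact nuZeroSlope_le_half g
  obtain ⟨z, hz⟩ := he.2.2.1 l
  have hz₁ : (1 : ℚ) ≤ z := by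
    have : (0 : ℚ) < z := hz ▸ mul_pos (by exact_mod_cast Nat.pos_of_ne_zero hl) hl₀
    exact_mod_cast (show (0 : ℤ) < z by exact_mod_cast this)
  have hle : (e l : ℚ) ≤ max (g : ℚ) 2 :=
    (by exact_mod_cast he.apply_le_of_ne_half hhalf : (e l : ℚ) ≤ g).trans (le_max_left _ _)
  rw [nuZeroSlope, div_le_iff₀ (by positivity)]
  nlinarith

theorem le_one_sub_nuZeroSlope (he : IsSymAdmissibleNP g e) (he₀ : e 0 = 0) {l : ℚ}
    (hl : e l ≠ 0) : l ≤ 1 - nuZeroSlope g := by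
  have := he.nuZeroSlope_le he₀ (l := 1 - l) (by rwa [← he.2.2.2.1 l])
  linarith

theorem npOnOrAbove_nuZero (he : IsSymAdmissibleNP g e) (he₀ : e 0 = 0) :
    NPOnOrAbove e (nuZero g) := by
  intro t
  set S := he.1.toFinset
  have hS : support e ⊆ S := by simp [S]
  have hmass : ∑ l ∈ S, (e l : ℚ) = g + g := by
    rw [← finsum_eq_sum_of_support_subset _ ((support_comp_subset Nat.cast_zero e).trans hS),
      he.finsum_cast, two_mul]
  have hmean : ∑ l ∈ S, (e l : ℚ) * l = g * nuZeroSlope g + g * (1 - nuZeroSlope g) := by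
    rw [← finsum_cast_mul_eq_sum hS, he.finsum_mul_self]
    ring
  have hslopes : ∀ l ∈ S, l ∈ Set.Icc (nuZeroSlope g) (1 - nuZeroSlope g) := fun l hl => by
    have hl : e l ≠ 0 := by simpa [S] using hl
    exact ⟨he.nuZeroSlope_le he₀ hl, he.le_one_sub_nuZeroSlope he₀ hl⟩
  rw [nuZero_eq_symPair, npConj_symPair, npConj, finsum_cast_mul_eq_sum hS]
  exact sum_mul_max_sub_le_of_mem_Icc (by linarith [nuZeroSlope_le_half g])
    (fun _ _ => by positivity) hslopes hmass hmean t

theorem npOnOrAbove_nuGF (he : IsSymAdmissibleNP g e) : NPOnOrAbove e (nuGF g (e 0)) := by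
  intro t
  have hint := he.interiorPart
  have hsplit : npConj e t = npConj (symPair (e 0) 0) t + npConj (_root_.interiorPart e) t := by
    conv_lhs => rw [← he.symPair_add_interiorPart]
    exact npConj_add (finite_support_symPair _ _) hint.1 t
  rw [hsplit, nuGF_eq, npConj_add (finite_support_symPair _ _) (isSymAdmissibleNP_nuZero _).1]
  have := hint.npOnOrAbove_nuZero (interiorPart_apply_zero e) t
  linarith

end IsSymAdmissibleNP

theorem nuGF_is_unique_maximal_general (g f : ℕ) (hf : f ≤ g) :
    IsSymAdmissibleNP g (nuGF g f) ∧ nuGF g f 0 = f ∧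
    (∀ e : ℚ → ℕ, IsSymAdmissibleNP g e → e 0 = f → NPOnOrAbove e (nuGF g f)) ∧
    (∀ e : ℚ → ℕ, IsSymAdmissibleNP g e → e 0 = f →
      (∀ e' : ℚ → ℕ, IsSymAdmissibleNP g e' → e' 0 = f → NPOnOrAbove e' e) →
      e = nuGF g f) := by
  have hν := isSymAdmissibleNP_nuGF hf
  have hmax : ∀ e, IsSymAdmissibleNP g e → e 0 = f → NPOnOrAbove e (nuGF g f) :=
    fun e he he₀ => he₀ ▸ he.npOnOrAbove_nuGF
  refine ⟨hν, nuGF_apply_zero g f, hmax, fun e he he₀ hmaximal => ?_⟩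
  exact NPOnOrAbove.antisymm he.1 hν.1 (hmax e he he₀) (hmaximal _ hν (nuGF_apply_zero g f))

/-- For every `g ≥ 1` and `0 ≤ f ≤ g`, the Newton polygon `ν_g^f` is a symmetric
admissible Newton polygon of height `2g` with slope-`0` multiplicity `f`, and it
is the unique maximal element, for the partial order `⪯`, among all symmetric
admissible Newton polygons of height `2g` whose slope-`0` multiplicity is `f`. -/
theorem nuGF_is_unique_maximal (g f : ℕ) (hg : 1 ≤ g) (hf : f ≤ g) :
    IsSymAdmissibleNP g (nuGF g f) ∧ nuGF g f 0 = f ∧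
    (∀ e : ℚ → ℕ, IsSymAdmissibleNP g e → e 0 = f → NPOnOrAbove e (nuGF g f)) ∧
    (∀ e : ℚ → ℕ, IsSymAdmissibleNP g e → e 0 = f →
      (∀ e' : ℚ → ℕ, IsSymAdmissibleNP g e' → e' 0 = f → NPOnOrAbove e' e) →
      e = nuGF g f) :=
  nuGF_is_unique_maximal_general g f hf
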